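/- Let λ ∈ ℂ with Im(λ) > 0, let √λ denote the square root of λ with positive real and imaginary parts, let p ∈ (1, ∞), q = p/(p−1), and V ∈ L^p(ℝ, ℂ). Then for every x ≥ 0, ∫_ℝ |G_λ(x,y)| |V(y)| dy ≤ (1/(q^{1/q} √|λ|)) · [ ‖V‖_{p,−}/(√2 · (Re √λ)^{1/q}) + ‖V‖_{p,+}/(Im √λ)^{1/q} ], and for every x ≤ 0, ∫_ℝ |G_λ(x,y)| |V(y)| dy ≤ (1/(q^{1/q} √|λ|)) · [ ‖V‖_{p,−}/(Re √λ)^{1/q} + ‖V‖_{p,+}/(√2 · (Im √λ)^{1/q}) ]. -/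

import Mathlib

open MeasureTheory Filter Topology Set
open scoped ENNReal

noncomputable section

/-- The square root of `lam` in the principal branch; for `lam` in the open upper
half-plane this is the square root with positive real and imaginary parts. -/
def csqrt (lam : ℂ) : ℂ := lam ^ ((1 : ℂ) / 2)

/-- The Green's function of `sgn(x)(−d²/dx²) − λ`. -/
def greenK (lam : ℂ) (x y : ℝ) : ℂ :=
  (1 / (2 * ((1 - Complex.I) / 2) * csqrt lam)) *
    (if 0 ≤ x then
      (if 0 ≤ y then
        ((1 - Complex.I) / 2) * Complex.exp (Complex.I * csqrt lam * ((x : ℂ) + (y : ℂ)))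
          + (starRingEnd ℂ) ((1 - Complex.I) / 2) *
              Complex.exp (Complex.I * csqrt lam * ((|x - y| : ℝ) : ℂ))
      else -Complex.exp (csqrt lam * (Complex.I * (x : ℂ) + (y : ℂ))))
    else
      (if 0 ≤ y then Complex.exp (csqrt lam * ((x : ℂ) + Complex.I * (y : ℂ)))
      else -((starRingEnd ℂ) ((1 - Complex.I) / 2) *
              Complex.exp (csqrt lam * ((x : ℂ) + (y : ℂ)))
          + ((1 - Complex.I) / 2) * Complex.exp (-csqrt lam * ((|x - y| : ℝ) : ℂ)))))

/-- `ψ` is an eigenfunction of the indefinite operator `H_V = sgn(x)(−d²/dx² + V)`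
with eigenvalue `lam`, in the weak sense. -/
def IsEigenpair (V : ℝ → ℂ) (lam : ℂ) (ψ : ℝ → ℂ) : Prop :=
  MemLp ψ 2 (volume : Measure ℝ) ∧
  ¬ ψ =ᵐ[(volume : Measure ℝ)] 0 ∧
  (∃ g : ℝ → ℂ, MemLp g 2 (volume : Measure ℝ) ∧
    ∀ x : ℝ, ψ x = ψ 0 + ∫ t in (0:ℝ)..x, g t) ∧
  ∀ φ : ℝ → ℂ, ContDiff ℝ (⊤ : ℕ∞) φ → HasCompactSupport φ →
    (- ∫ x : ℝ, ψ x * deriv (deriv φ) x) + (∫ x : ℝ, V x * ψ x * φ x)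
      = lam * ∫ x : ℝ, (Real.sign x : ℂ) * ψ x * φ x

/-- `lam` is an eigenvalue of the indefinite operator `H_V = sgn(x)(−d²/dx² + V)`. -/
def IsEigenvalue (V : ℝ → ℂ) (lam : ℂ) : Prop := ∃ ψ, IsEigenpair V lam ψ


variable {lam : ℂ}

lemma lam_ne_zero (hlam : 0 < lam.im) : lam ≠ 0 := fun h => by simp [h] at hlam

lemma arg_bounds (hlam : 0 < lam.im) : 0 < lam.arg ∧ lam.arg < Real.pi := by
  constructor
  · rcases lt_or_eq_of_le (Complex.arg_nonneg_iff.mpr hlam.le) with h | h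
    · exact h
    · exfalso
      have := Complex.arg_eq_zero_iff.mp h.symm
      simp [this.2] at hlam
  · exact Complex.arg_lt_pi_iff.mpr (Or.inr (ne_of_gt hlam))

lemma csqrt_eq (h : lam ≠ 0) : csqrt lam = Complex.exp (Complex.log lam * (1/2)) := by
  rw [csqrt, Complex.cpow_def_of_ne_zero h]

lemma csqrt_re_pos (hlam : 0 < lam.im) : 0 < (csqrt lam).re := by
  obtain ⟨h1, h2⟩ := arg_bounds hlam
  rw [csqrt_eq (lam_ne_zero hlam), Complex.exp_re]
  have him : (Complex.log lam * (1/2)).im = lam.arg / 2 := by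
    simp [Complex.mul_im, Complex.log_im]
    ring
  rw [him]
  have : 0 < Real.cos (lam.arg / 2) := by
    apply Real.cos_pos_of_mem_Ioo
    constructor <;> [linarith [Real.pi_pos]; linarith]
  positivity

lemma csqrt_im_pos (hlam : 0 < lam.im) : 0 < (csqrt lam).im := by
  obtain ⟨h1, h2⟩ := arg_bounds hlam
  rw [csqrt_eq (lam_ne_zero hlam), Complex.exp_im]
  have him : (Complex.log lam * (1/2)).im = lam.arg / 2 := by
    simp [Complex.mul_im, Complex.log_im]
    ring
  rw [him]
  have : 0 < Real.sin (lam.arg / 2) := Real.sin_pos_of_pos_of_lt_pi (by linarith) (by linarith)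
  positivity

lemma abs_csqrt (h : lam ≠ 0) : ‖csqrt lam‖ = Real.sqrt (‖lam‖) := by
  rw [csqrt, Complex.norm_cpow_of_ne_zero h]
  simp [Real.sqrt_eq_rpow]


lemma integrableOn_exp_neg_mul {c : ℝ} (hc : 0 < c) (a : ℝ) :
    IntegrableOn (fun y : ℝ => Real.exp (-(c * y))) (Ioi a) := by
  simpa [neg_mul] using exp_neg_integrableOn_Ioi a hc

lemma integral_exp_neg_mul {c : ℝ} (hc : 0 < c) (a : ℝ) :
    ∫ y in Ioi a, Real.exp (-(c * y)) = Real.exp (-(c * a)) / c := by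
  have hderiv : ∀ y ∈ Ici a, HasDerivAt (fun y : ℝ => -(Real.exp (-(c * y)) / c))
      (Real.exp (-(c * y))) y := by
    intro y _
    have h1 : HasDerivAt (fun y : ℝ => -(c * y)) (-c) y := by
      simpa using (hasDerivAt_id y).const_mul (-c)
    have h2 := (h1.exp.div_const c).neg
    exact h2.congr_deriv (by field_simp)
  have htend : Tendsto (fun y : ℝ => -(Real.exp (-(c * y)) / c)) atTop (𝓝 0) := by
    have : Tendsto (fun y : ℝ => c * y) atTop atTop :=
      Tendsto.const_mul_atTop hc tendsto_id
    have h := (Real.tendsto_exp_neg_atTop_nhds_zero.comp this).div_const c |>.neg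
    simpa using h
  have := integral_Ioi_of_hasDerivAt_of_tendsto' hderiv (integrableOn_exp_neg_mul hc a) htend
  rw [this]
  ring

lemma integrableOn_exp_shift_Ioi {c : ℝ} (hc : 0 < c) (t a : ℝ) :
    IntegrableOn (fun y : ℝ => Real.exp (-(c * (t + y)))) (Ioi a) := by
  have h := (integrableOn_exp_neg_mul hc a).const_mul (Real.exp (-(c * t)))
  refine IntegrableOn.congr_fun h (fun y _ => ?_) measurableSet_Ioi
  rw [← Real.exp_add]; ring_nf

lemma integral_exp_shift_Ioi {c : ℝ} (hc : 0 < c) (t a : ℝ) :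
    ∫ y in Ioi a, Real.exp (-(c * (t + y))) = Real.exp (-(c * (t + a))) / c := by
  have h1 : ∀ y : ℝ, Real.exp (-(c * (t + y))) = Real.exp (-(c * t)) * Real.exp (-(c * y)) := by
    intro y; rw [← Real.exp_add]; ring_nf
  simp_rw [h1]
  rw [MeasureTheory.integral_const_mul, integral_exp_neg_mul hc a, ← mul_div_assoc,
    ← Real.exp_add]


-- the absolute-value kernel on Ioi 0, x ≥ 0
lemma integrableOn_exp_abs {c : ℝ} (hc : 0 < c) (x : ℝ) :
    IntegrableOn (fun y : ℝ => Real.exp (-(c * |x - y|))) (Ioi (0:ℝ)) := by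
  have hcont : Continuous (fun y : ℝ => Real.exp (-(c * |x - y|))) := by
    continuity
  have h1 : IntegrableOn (fun y : ℝ => Real.exp (-(c * |x - y|))) (Ioc 0 x) :=
    hcont.continuousOn.integrableOn_compact isCompact_Icc |>.mono_set Ioc_subset_Icc_self
  have h2 : IntegrableOn (fun y : ℝ => Real.exp (-(c * |x - y|))) (Ioi x) := by
    refine IntegrableOn.congr_fun ((integrableOn_exp_shift_Ioi hc (-x) x)) (fun y hy => ?_)
      measurableSet_Ioi
    have : |x - y| = -x + y := by
      rw [abs_of_nonpos (by simp at hy ⊢; linarith)]; ring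
    rw [this]
  rcases le_or_gt x 0 with hx | hx
  · refine IntegrableOn.mono_set ?_ (Ioi_subset_Ioi hx : Ioi (0:ℝ) ⊆ _) |>.mono_set ?_
    · exact h2
    · exact fun y hy => hy
  · rw [← Ioc_union_Ioi_eq_Ioi hx.le]
    exact h1.union h2

lemma integral_exp_abs_Ioi {c : ℝ} (hc : 0 < c) {x : ℝ} (hx : 0 ≤ x) :
    ∫ y in Ioi (0:ℝ), Real.exp (-(c * |x - y|)) = (2 - Real.exp (-(c * x))) / c := by
  have hcont : Continuous (fun y : ℝ => Real.exp (-(c * |x - y|))) := by continuity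
  have h1 : IntegrableOn (fun y : ℝ => Real.exp (-(c * |x - y|))) (Ioc 0 x) :=
    hcont.continuousOn.integrableOn_compact isCompact_Icc |>.mono_set Ioc_subset_Icc_self
  have h2 : IntegrableOn (fun y : ℝ => Real.exp (-(c * |x - y|))) (Ioi x) := by
    refine IntegrableOn.congr_fun ((integrableOn_exp_shift_Ioi hc (-x) x)) (fun y hy => ?_)
      measurableSet_Ioi
    have : |x - y| = -x + y := by
      rw [abs_of_nonpos (by simp at hy ⊢; linarith)]; ring
    rw [this]
  rw [← Ioc_union_Ioi_eq_Ioi hx, setIntegral_union Ioc_disjoint_Ioi_same measurableSet_Ioi h1 h2]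
  have e2 : ∫ y in Ioi x, Real.exp (-(c * |x - y|)) = 1 / c := by
    rw [setIntegral_congr_fun measurableSet_Ioi
      (fun y hy => by
        have : |x - y| = -x + y := by
          rw [abs_of_nonpos (by simp at hy ⊢; linarith)]; ring
        rw [this] : EqOn _ (fun y : ℝ => Real.exp (-(c * (-x + y)))) _)]
    rw [integral_exp_shift_Ioi hc (-x) x]
    simp
  have e1 : ∫ y in Ioc 0 x, Real.exp (-(c * |x - y|)) = (1 - Real.exp (-(c*x))) / c := by
    rw [setIntegral_congr_fun measurableSet_Ioc
      (fun y hy => by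
        have : |x - y| = x - y := abs_of_nonneg (by simp at hy ⊢; linarith [hy.2])
        rw [this] : EqOn _ (fun y : ℝ => Real.exp (-(c * (x - y)))) _)]
    rw [← intervalIntegral.integral_of_le hx]
    have : ∀ y : ℝ, Real.exp (-(c * (x - y))) = Real.exp (-(c*x)) * Real.exp (c * y) := by
      intro y; rw [← Real.exp_add]; ring_nf
    simp_rw [this]
    rw [intervalIntegral.integral_const_mul]
    have h3 : ∫ y in (0:ℝ)..x, Real.exp (c * y) = (Real.exp (c*x) - 1) / c := by
      rw [intervalIntegral.integral_comp_mul_left (f := fun u => Real.exp u) (ne_of_gt hc)]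
      simp [integral_exp, mul_comm, div_eq_inv_mul]
    have hxx : Real.exp (-(c*x)) * Real.exp (c*x) = 1 := by rw [← Real.exp_add]; simp
    rw [h3]
    field_simp
    linear_combination hxx
  rw [e1, e2]
  ring


lemma lintegral_comp_neg_Iio (f : ℝ → ℝ≥0∞) (c : ℝ) :
    ∫⁻ x in Iio c, f (-x) = ∫⁻ x in Ioi (-c), f x := by
  have A : MeasurableEmbedding (Neg.neg : ℝ → ℝ) :=
    (Homeomorph.neg ℝ).isClosedEmbedding.measurableEmbedding
  have h0 : (Neg.neg : ℝ → ℝ) ⁻¹' (Ioi (-c)) = Iio c := by ext y; simp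
  conv_rhs => rw [← Measure.map_neg_eq_self (volume : Measure ℝ)]
  rw [Measure.restrict_map A.measurable measurableSet_Ioi, A.lintegral_map, h0]


lemma lint_exp_shift_Ioi {c : ℝ} (hc : 0 < c) (t : ℝ) :
    ∫⁻ y in Ioi (0:ℝ), ENNReal.ofReal (Real.exp (-(c * (t + y))))
      = ENNReal.ofReal (Real.exp (-(c * t)) / c) := by
  rw [← ofReal_integral_eq_lintegral_ofReal (integrableOn_exp_shift_Ioi hc t 0)
    (ae_of_all _ fun y => (Real.exp_pos _).le), integral_exp_shift_Ioi hc t 0]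
  norm_num

lemma lint_exp_shift_Iio {c : ℝ} (hc : 0 < c) (t : ℝ) :
    ∫⁻ y in Iio (0:ℝ), ENNReal.ofReal (Real.exp (c * (t + y)))
      = ENNReal.ofReal (Real.exp (c * t) / c) := by
  calc ∫⁻ y in Iio (0:ℝ), ENNReal.ofReal (Real.exp (c * (t + y)))
      = ∫⁻ y in Iio (0:ℝ), (fun u => ENNReal.ofReal (Real.exp (-(c * (-t + u))))) (-y) := by
        apply lintegral_congr; intro y; simp only; congr 2; ring
    _ = ∫⁻ u in Ioi (0:ℝ), ENNReal.ofReal (Real.exp (-(c * (-t + u)))) := by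
        simpa using lintegral_comp_neg_Iio
          (fun u => ENNReal.ofReal (Real.exp (-(c * (-t + u))))) 0
    _ = ENNReal.ofReal (Real.exp (c * t) / c) := by
        rw [lint_exp_shift_Ioi hc (-t)]; ring_nf

lemma lint_exp_abs_Ioi' {c : ℝ} (hc : 0 < c) {x : ℝ} (hx : 0 ≤ x) :
    ∫⁻ y in Ioi (0:ℝ), ENNReal.ofReal (Real.exp (-(c * |x - y|)))
      = ENNReal.ofReal ((2 - Real.exp (-(c * x))) / c) := by
  rw [← ofReal_integral_eq_lintegral_ofReal (integrableOn_exp_abs hc x)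
    (ae_of_all _ fun y => (Real.exp_pos _).le), integral_exp_abs_Ioi hc hx]

lemma lint_exp_abs_Iio' {c : ℝ} (hc : 0 < c) {x : ℝ} (hx : x ≤ 0) :
    ∫⁻ y in Iio (0:ℝ), ENNReal.ofReal (Real.exp (-(c * |x - y|)))
      = ENNReal.ofReal ((2 - Real.exp (c * x)) / c) := by
  calc ∫⁻ y in Iio (0:ℝ), ENNReal.ofReal (Real.exp (-(c * |x - y|)))
      = ∫⁻ y in Iio (0:ℝ), (fun u => ENNReal.ofReal (Real.exp (-(c * |(-x) - u|)))) (-y) := by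
        apply lintegral_congr; intro y; simp only; congr 3
        rw [← abs_neg]; ring_nf
    _ = ∫⁻ u in Ioi (0:ℝ), ENNReal.ofReal (Real.exp (-(c * |(-x) - u|))) := by
        simpa using lintegral_comp_neg_Iio
          (fun u => ENNReal.ofReal (Real.exp (-(c * |(-x) - u|)))) 0
    _ = ENNReal.ofReal ((2 - Real.exp (c * x)) / c) := by
        rw [lint_exp_abs_Ioi' hc (neg_nonneg.mpr hx)]
        norm_num

lemma lint_sum_Ioi {c : ℝ} (hc : 0 < c) {x : ℝ} (hx : 0 ≤ x) :
    (∫⁻ y in Ioi (0:ℝ), ENNReal.ofReal (Real.exp (-(c * |x - y|))))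
      + (∫⁻ y in Ioi (0:ℝ), ENNReal.ofReal (Real.exp (-(c * (x + y)))))
      = ENNReal.ofReal (2 / c) := by
  have h1 : Real.exp (-(c * x)) ≤ 1 := Real.exp_le_one_iff.mpr (by nlinarith)
  rw [lint_exp_abs_Ioi' hc hx, lint_exp_shift_Ioi hc x,
    ← ENNReal.ofReal_add (div_nonneg (by linarith) hc.le) (by positivity)]
  congr 1
  field_simp
  ring

lemma lint_sum_Iio {c : ℝ} (hc : 0 < c) {x : ℝ} (hx : x ≤ 0) :
    (∫⁻ y in Iio (0:ℝ), ENNReal.ofReal (Real.exp (-(c * |x - y|))))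
      + (∫⁻ y in Iio (0:ℝ), ENNReal.ofReal (Real.exp (c * (x + y))))
      = ENNReal.ofReal (2 / c) := by
  have h1 : Real.exp (c * x) ≤ 1 := Real.exp_le_one_iff.mpr (by nlinarith)
  rw [lint_exp_abs_Iio' hc hx, lint_exp_shift_Iio hc x,
    ← ENNReal.ofReal_add (div_nonneg (by linarith) hc.le) (by positivity)]
  congr 1
  field_simp
  ring


lemma half_bound {S : Set ℝ} (K : ℝ → ℝ)
    {p q : ℝ} (hpq : p.HolderConjugate q) {V : ℝ → ℂ}
    (hV : AEStronglyMeasurable V (volume.restrict S)) {M : ℝ} (hM : 0 ≤ M)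
    (hKm : AEMeasurable (fun y => ENNReal.ofReal (K y)) (volume.restrict S))
    (hKq : ∫⁻ y in S, ENNReal.ofReal (K y) ^ q ≤ ENNReal.ofReal (M ^ q)) :
    ∫⁻ y in S, ENNReal.ofReal (K y) * ‖V y‖₊ ≤
      ENNReal.ofReal M * eLpNorm V (ENNReal.ofReal p) (volume.restrict S) := by
  have hq0 : 0 < q := hpq.symm.pos
  have h := ENNReal.lintegral_mul_le_Lp_mul_Lq (volume.restrict S) hpq.symm hKm hV.enorm
  simp only [Pi.mul_apply] at h
  refine h.trans (mul_le_mul ?_ ?_ zero_le zero_le)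
  · calc (∫⁻ y in S, ENNReal.ofReal (K y) ^ q) ^ (1/q)
        ≤ (ENNReal.ofReal (M ^ q)) ^ (1/q) :=
          ENNReal.rpow_le_rpow hKq (by positivity)
      _ = ENNReal.ofReal M := by
          rw [← ENNReal.ofReal_rpow_of_nonneg hM hq0.le, ← ENNReal.rpow_mul, mul_one_div,
            div_self (ne_of_gt hq0), ENNReal.rpow_one]
  · rw [eLpNorm_eq_lintegral_rpow_enorm_toReal (by simp [hpq.pos] : ENNReal.ofReal p ≠ 0)
      ENNReal.ofReal_ne_top, ENNReal.toReal_ofReal hpq.pos.le]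

lemma kq_single_Iio {ar C q : ℝ} (har : 0 < ar) (hC : 0 ≤ C) (hq : 0 < q) :
    ∫⁻ y in Iio (0:ℝ), ENNReal.ofReal (C * Real.exp (ar * y)) ^ q
      = ENNReal.ofReal (C ^ q / (q * ar)) := by
  have h1 : ∀ y : ℝ, ENNReal.ofReal (C * Real.exp (ar * y)) ^ q
      = ENNReal.ofReal (C ^ q) * ENNReal.ofReal (Real.exp ((q * ar) * (0 + y))) := by
    intro y
    rw [ENNReal.ofReal_rpow_of_nonneg (by positivity) hq.le,
      Real.mul_rpow hC (Real.exp_pos _).le, ← Real.exp_mul,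
      ENNReal.ofReal_mul (by positivity)]
    congr 3
    ring
  simp_rw [h1]
  rw [lintegral_const_mul' _ _ ENNReal.ofReal_ne_top, lint_exp_shift_Iio (by positivity) 0,
    ← ENNReal.ofReal_mul (by positivity)]
  congr 1
  rw [mul_zero, Real.exp_zero]
  ring

lemma kq_single_Ioi {br C q : ℝ} (hbr : 0 < br) (hC : 0 ≤ C) (hq : 0 < q) :
    ∫⁻ y in Ioi (0:ℝ), ENNReal.ofReal (C * Real.exp (-(br * y))) ^ q
      = ENNReal.ofReal (C ^ q / (q * br)) := by
  have h1 : ∀ y : ℝ, ENNReal.ofReal (C * Real.exp (-(br * y))) ^ q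
      = ENNReal.ofReal (C ^ q) * ENNReal.ofReal (Real.exp (-((q * br) * (0 + y)))) := by
    intro y
    rw [ENNReal.ofReal_rpow_of_nonneg (by positivity) hq.le,
      Real.mul_rpow hC (Real.exp_pos _).le, ← Real.exp_mul,
      ENNReal.ofReal_mul (by positivity)]
    congr 3
    ring
  simp_rw [h1]
  rw [lintegral_const_mul' _ _ ENNReal.ofReal_ne_top, lint_exp_shift_Ioi (by positivity) 0,
    ← ENNReal.ofReal_mul (by positivity)]
  congr 1
  rw [mul_zero, neg_zero, Real.exp_zero]
  ring


lemma two_rpow_helper {q : ℝ} (hq : 1 ≤ q) : (2:ℝ) ^ (q-1) * 2 = 2 ^ q := by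
  rw [← Real.rpow_add_one (by norm_num : (2:ℝ) ≠ 0)]
  norm_num

lemma kq_pair_Ioi {br C q x : ℝ} (hbr : 0 < br) (hC : 0 ≤ C) (hq : 1 ≤ q) (hx : 0 ≤ x) :
    ∫⁻ y in Ioi (0:ℝ),
        ENNReal.ofReal (C * (Real.exp (-(br * |x - y|)) + Real.exp (-(br * (x + y))))) ^ q
      ≤ ENNReal.ofReal ((2 * C) ^ q / (q * br)) := by
  have hq0 : 0 < q := lt_of_lt_of_le one_pos hq
  have h1 : ∀ y : ℝ,
      ENNReal.ofReal (C * (Real.exp (-(br * |x - y|)) + Real.exp (-(br * (x + y))))) ^ q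
      ≤ ENNReal.ofReal (C ^ q * 2 ^ (q-1)) *
        (ENNReal.ofReal (Real.exp (-((q * br) * |x - y|)))
          + ENNReal.ofReal (Real.exp (-((q * br) * (x + y))))) := by
    intro y
    set e1 := Real.exp (-(br * |x - y|)) with he1def
    set e2 := Real.exp (-(br * (x + y))) with he2def
    have he1 : 0 ≤ e1 := (Real.exp_pos _).le
    have he2 : 0 ≤ e2 := (Real.exp_pos _).le
    rw [ENNReal.ofReal_mul hC, ENNReal.ofReal_add he1 he2,
      ENNReal.mul_rpow_of_nonneg _ _ hq0.le]
    have h2 := ENNReal.rpow_add_le_mul_rpow_add_rpow (ENNReal.ofReal e1) (ENNReal.ofReal e2) hq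
    calc ENNReal.ofReal C ^ q * (ENNReal.ofReal e1 + ENNReal.ofReal e2) ^ q
        ≤ ENNReal.ofReal C ^ q *
            ((2:ℝ≥0∞) ^ (q-1) * (ENNReal.ofReal e1 ^ q + ENNReal.ofReal e2 ^ q)) :=
          mul_le_mul_right h2 _
      _ = ENNReal.ofReal (C ^ q * 2 ^ (q-1)) * (ENNReal.ofReal (e1 ^ q) + ENNReal.ofReal (e2 ^ q)) := by
          rw [ENNReal.ofReal_rpow_of_nonneg he1 hq0.le, ENNReal.ofReal_rpow_of_nonneg he2 hq0.le,
            ENNReal.ofReal_mul (by positivity), ENNReal.ofReal_rpow_of_nonneg hC hq0.le,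
            show (2:ℝ≥0∞) = ENNReal.ofReal 2 by norm_num,
            ENNReal.ofReal_rpow_of_nonneg (by norm_num) (by linarith)]
          ring
      _ = _ := by
          congr 2
          · rw [he1def, ← Real.exp_mul]
            congr 1; ring
          · rw [he2def, ← Real.exp_mul]
            congr 1; ring
  have hmeas : Measurable fun y : ℝ => ENNReal.ofReal (Real.exp (-((q * br) * |x - y|))) := by
    apply Measurable.ennreal_ofReal
    fun_prop
  calc ∫⁻ y in Ioi (0:ℝ),
        ENNReal.ofReal (C * (Real.exp (-(br * |x - y|)) + Real.exp (-(br * (x + y))))) ^ q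
      ≤ ∫⁻ y in Ioi (0:ℝ), ENNReal.ofReal (C ^ q * 2 ^ (q-1)) *
          (ENNReal.ofReal (Real.exp (-((q * br) * |x - y|)))
            + ENNReal.ofReal (Real.exp (-((q * br) * (x + y))))) := lintegral_mono h1
    _ = ENNReal.ofReal (C ^ q * 2 ^ (q-1)) *
          ((∫⁻ y in Ioi (0:ℝ), ENNReal.ofReal (Real.exp (-((q * br) * |x - y|))))
            + (∫⁻ y in Ioi (0:ℝ), ENNReal.ofReal (Real.exp (-((q * br) * (x + y)))))) := by
        rw [lintegral_const_mul' _ _ ENNReal.ofReal_ne_top, lintegral_add_left hmeas]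
    _ = ENNReal.ofReal (C ^ q * 2 ^ (q-1)) * ENNReal.ofReal (2 / (q * br)) := by
        rw [lint_sum_Ioi (by positivity) hx]
    _ = ENNReal.ofReal ((2 * C) ^ q / (q * br)) := by
        rw [← ENNReal.ofReal_mul (by positivity)]
        congr 1
        rw [Real.mul_rpow (by norm_num) hC, ← two_rpow_helper hq]
        field_simp

lemma kq_pair_Iio {ar C q x : ℝ} (har : 0 < ar) (hC : 0 ≤ C) (hq : 1 ≤ q) (hx : x ≤ 0) :
    ∫⁻ y in Iio (0:ℝ),
        ENNReal.ofReal (C * (Real.exp (-(ar * |x - y|)) + Real.exp (ar * (x + y)))) ^ q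
      ≤ ENNReal.ofReal ((2 * C) ^ q / (q * ar)) := by
  have hq0 : 0 < q := lt_of_lt_of_le one_pos hq
  have h1 : ∀ y : ℝ,
      ENNReal.ofReal (C * (Real.exp (-(ar * |x - y|)) + Real.exp (ar * (x + y)))) ^ q
      ≤ ENNReal.ofReal (C ^ q * 2 ^ (q-1)) *
        (ENNReal.ofReal (Real.exp (-((q * ar) * |x - y|)))
          + ENNReal.ofReal (Real.exp ((q * ar) * (x + y)))) := by
    intro y
    set e1 := Real.exp (-(ar * |x - y|)) with he1def
    set e2 := Real.exp (ar * (x + y)) with he2def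
    have he1 : 0 ≤ e1 := (Real.exp_pos _).le
    have he2 : 0 ≤ e2 := (Real.exp_pos _).le
    rw [ENNReal.ofReal_mul hC, ENNReal.ofReal_add he1 he2,
      ENNReal.mul_rpow_of_nonneg _ _ hq0.le]
    have h2 := ENNReal.rpow_add_le_mul_rpow_add_rpow (ENNReal.ofReal e1) (ENNReal.ofReal e2) hq
    calc ENNReal.ofReal C ^ q * (ENNReal.ofReal e1 + ENNReal.ofReal e2) ^ q
        ≤ ENNReal.ofReal C ^ q *
            ((2:ℝ≥0∞) ^ (q-1) * (ENNReal.ofReal e1 ^ q + ENNReal.ofReal e2 ^ q)) :=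
          mul_le_mul_right h2 _
      _ = ENNReal.ofReal (C ^ q * 2 ^ (q-1)) * (ENNReal.ofReal (e1 ^ q) + ENNReal.ofReal (e2 ^ q)) := by
          rw [ENNReal.ofReal_rpow_of_nonneg he1 hq0.le, ENNReal.ofReal_rpow_of_nonneg he2 hq0.le,
            ENNReal.ofReal_mul (by positivity), ENNReal.ofReal_rpow_of_nonneg hC hq0.le,
            show (2:ℝ≥0∞) = ENNReal.ofReal 2 by norm_num,
            ENNReal.ofReal_rpow_of_nonneg (by norm_num) (by linarith)]
          ring
      _ = _ := by
          congr 2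
          · rw [he1def, ← Real.exp_mul]
            congr 1; ring
          · rw [he2def, ← Real.exp_mul]
            congr 1; ring
  have hmeas : Measurable fun y : ℝ => ENNReal.ofReal (Real.exp (-((q * ar) * |x - y|))) := by
    apply Measurable.ennreal_ofReal
    fun_prop
  calc ∫⁻ y in Iio (0:ℝ),
        ENNReal.ofReal (C * (Real.exp (-(ar * |x - y|)) + Real.exp (ar * (x + y)))) ^ q
      ≤ ∫⁻ y in Iio (0:ℝ), ENNReal.ofReal (C ^ q * 2 ^ (q-1)) *
          (ENNReal.ofReal (Real.exp (-((q * ar) * |x - y|)))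
            + ENNReal.ofReal (Real.exp ((q * ar) * (x + y)))) := lintegral_mono h1
    _ = ENNReal.ofReal (C ^ q * 2 ^ (q-1)) *
          ((∫⁻ y in Iio (0:ℝ), ENNReal.ofReal (Real.exp (-((q * ar) * |x - y|))))
            + (∫⁻ y in Iio (0:ℝ), ENNReal.ofReal (Real.exp ((q * ar) * (x + y))))) := by
        rw [lintegral_const_mul' _ _ ENNReal.ofReal_ne_top, lintegral_add_left hmeas]
    _ = ENNReal.ofReal (C ^ q * 2 ^ (q-1)) * ENNReal.ofReal (2 / (q * ar)) := by
        rw [lint_sum_Iio (by positivity) hx]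
    _ = ENNReal.ofReal ((2 * C) ^ q / (q * ar)) := by
        rw [← ENNReal.ofReal_mul (by positivity)]
        congr 1
        rw [Real.mul_rpow (by norm_num) hC, ← two_rpow_helper hq]
        field_simp


lemma abs_one_sub_I : ‖1 - Complex.I‖ = Real.sqrt 2 := by
  rw [Complex.norm_def, Complex.normSq_apply]
  norm_num

lemma abs_alpha : ‖(1 - Complex.I) / 2‖ = Real.sqrt 2 / 2 := by
  rw [norm_div, abs_one_sub_I]
  norm_num

lemma abs_pref (lam : ℂ) :
    ‖1 / (2 * ((1 - Complex.I) / 2) * csqrt lam)‖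
      = 1 / (Real.sqrt 2 * ‖csqrt lam‖) := by
  have h2 : ‖(2:ℂ)‖ = 2 := by norm_num
  rw [norm_div, norm_mul, norm_mul, abs_alpha, h2, norm_one]
  rw [show (2:ℝ) * (Real.sqrt 2 / 2) = Real.sqrt 2 by ring]

-- x ≥ 0, y < 0
lemma greenK_abs_pos_neg (lam : ℂ) {x y : ℝ} (hx : 0 ≤ x) (hy : y < 0) :
    ‖greenK lam x y‖
      = 1 / (Real.sqrt 2 * ‖csqrt lam‖) *
          Real.exp ((csqrt lam).re * y - (csqrt lam).im * x) := by
  rw [greenK, if_pos hx, if_neg (not_le.mpr hy), norm_mul, abs_pref, norm_neg,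
    Complex.norm_exp]
  congr 2
  simp [Complex.mul_re, Complex.add_re, Complex.add_im, Complex.mul_im]
  try ring

-- x < 0, y ≥ 0
lemma greenK_abs_neg_pos (lam : ℂ) {x y : ℝ} (hx : x < 0) (hy : 0 ≤ y) :
    ‖greenK lam x y‖
      = 1 / (Real.sqrt 2 * ‖csqrt lam‖) *
          Real.exp ((csqrt lam).re * x - (csqrt lam).im * y) := by
  rw [greenK, if_neg (not_le.mpr hx), if_pos hy, norm_mul, abs_pref, Complex.norm_exp]
  congr 2
  simp [Complex.mul_re, Complex.add_re, Complex.add_im, Complex.mul_im]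
  try ring

-- x ≥ 0, y ≥ 0
lemma greenK_abs_pos_pos (lam : ℂ) {x y : ℝ} (hx : 0 ≤ x) (hy : 0 ≤ y) :
    ‖greenK lam x y‖
      ≤ 1 / (2 * ‖csqrt lam‖) *
          (Real.exp (-((csqrt lam).im * |x - y|)) + Real.exp (-((csqrt lam).im * (x + y)))) := by
  rw [greenK, if_pos hx, if_pos hy, norm_mul, abs_pref]
  have h1 : ‖((1 - Complex.I) / 2) *
        Complex.exp (Complex.I * csqrt lam * ((x : ℂ) + (y : ℂ)))
      + (starRingEnd ℂ) ((1 - Complex.I) / 2) *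
        Complex.exp (Complex.I * csqrt lam * ((|x - y| : ℝ) : ℂ))‖
      ≤ Real.sqrt 2 / 2 *
        (Real.exp (-((csqrt lam).im * |x - y|)) + Real.exp (-((csqrt lam).im * (x + y)))) := by
    refine (norm_add_le _ _).trans ?_
    rw [norm_mul, norm_mul, Complex.norm_conj, abs_alpha, Complex.norm_exp, Complex.norm_exp]
    have e1 : (Complex.I * csqrt lam * ((x : ℂ) + (y : ℂ))).re
        = -((csqrt lam).im * (x + y)) := by
      simp [Complex.mul_re, Complex.mul_im, Complex.add_re, Complex.add_im]
      try ring
    have e2 : (Complex.I * csqrt lam * ((|x - y| : ℝ) : ℂ)).re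
        = -((csqrt lam).im * |x - y|) := by
      simp [Complex.mul_re, Complex.mul_im]
      try ring
    rw [e1, e2]
    ring_nf
    apply le_of_eq
    ring
  calc 1 / (Real.sqrt 2 * ‖csqrt lam‖) * ‖_‖
      ≤ 1 / (Real.sqrt 2 * ‖csqrt lam‖) *
          (Real.sqrt 2 / 2 *
            (Real.exp (-((csqrt lam).im * |x - y|)) + Real.exp (-((csqrt lam).im * (x + y))))) := by
        apply mul_le_mul_of_nonneg_left h1
        positivity
    _ = _ := by
        rcases eq_or_ne (‖csqrt lam‖) 0 with h | h
        · rw [h]; ring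
        · have hs2 : Real.sqrt 2 ≠ 0 := by positivity
          field_simp
          try rw [Real.sq_sqrt (by norm_num : (0:ℝ) ≤ 2)]
          try ring

-- x ≤ 0, y < 0
lemma greenK_abs_neg_neg (lam : ℂ) {x y : ℝ} (hx : x ≤ 0) (hy : y < 0) :
    ‖greenK lam x y‖
      ≤ 1 / (2 * ‖csqrt lam‖) *
          (Real.exp (-((csqrt lam).re * |x - y|)) + Real.exp ((csqrt lam).re * (x + y))) := by
  rcases lt_or_eq_of_le hx with hx' | hx'
  · rw [greenK, if_neg (not_le.mpr hx'), if_neg (not_le.mpr hy), norm_mul, abs_pref,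
      norm_neg]
    have h1 : ‖(starRingEnd ℂ) ((1 - Complex.I) / 2) *
          Complex.exp (csqrt lam * ((x : ℂ) + (y : ℂ)))
        + ((1 - Complex.I) / 2) * Complex.exp (-csqrt lam * ((|x - y| : ℝ) : ℂ))‖
        ≤ Real.sqrt 2 / 2 *
          (Real.exp (-((csqrt lam).re * |x - y|)) + Real.exp ((csqrt lam).re * (x + y))) := by
      refine (norm_add_le _ _).trans ?_
      rw [norm_mul, norm_mul, Complex.norm_conj, abs_alpha, Complex.norm_exp, Complex.norm_exp]
      have e1 : (csqrt lam * ((x : ℂ) + (y : ℂ))).re = (csqrt lam).re * (x + y) := by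
        simp [Complex.mul_re, Complex.add_re, Complex.add_im]
      have e2 : (-csqrt lam * ((|x - y| : ℝ) : ℂ)).re = -((csqrt lam).re * |x - y|) := by
        simp [Complex.mul_re]
      rw [e1, e2]
      apply le_of_eq
      ring
    calc 1 / (Real.sqrt 2 * ‖csqrt lam‖) * ‖_‖
        ≤ 1 / (Real.sqrt 2 * ‖csqrt lam‖) *
            (Real.sqrt 2 / 2 *
              (Real.exp (-((csqrt lam).re * |x - y|)) + Real.exp ((csqrt lam).re * (x + y)))) := by
          apply mul_le_mul_of_nonneg_left h1
          positivity
      _ = _ := by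
          rcases eq_or_ne (‖csqrt lam‖) 0 with h | h
          · rw [h]; ring
          · have hs2 : Real.sqrt 2 ≠ 0 := by positivity
            field_simp
            try rw [Real.sq_sqrt (by norm_num : (0:ℝ) ≤ 2)]
            try ring
  · -- x = 0
    subst hx'
    rw [greenK_abs_pos_neg lam le_rfl hy]
    set A := ‖csqrt lam‖ with hAdef
    have hA : 0 ≤ A := norm_nonneg _
    have key : ∀ E : ℝ, 0 ≤ E → 1 / (Real.sqrt 2 * A) * E ≤ 1 / (2 * A) * (E + E) := by
      intro E hE
      rcases eq_or_lt_of_le hA with h | h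
      · rw [← h]; simp
      · rw [div_mul_eq_mul_div, div_mul_eq_mul_div,
          div_le_div_iff₀ (by positivity) (by positivity)]
        have hs1 : (1:ℝ) ≤ Real.sqrt 2 := by
          rw [show (1:ℝ) = Real.sqrt 1 by simp]
          exact Real.sqrt_le_sqrt (by norm_num)
        nlinarith [mul_nonneg (mul_nonneg (sub_nonneg.mpr hs1) hE) h.le]
    have e0 : (csqrt lam).re * y - (csqrt lam).im * 0 = (csqrt lam).re * y := by ring
    have e1 : -((csqrt lam).re * |0 - y|) = (csqrt lam).re * y := by
      rw [abs_of_nonneg (by linarith : (0:ℝ) ≤ 0 - y)]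
      ring
    have e2 : (csqrt lam).re * (0 + y) = (csqrt lam).re * y := by ring
    rw [e0, e1, e2]
    exact key _ (Real.exp_pos _).le


lemma measurable_greenK (lam : ℂ) (x : ℝ) : Measurable fun y : ℝ => greenK lam x y := by
  unfold greenK
  apply Measurable.const_mul
  by_cases hx : 0 ≤ x <;> simp only [hx, if_true, if_false]
  · exact Measurable.ite measurableSet_Ici (by fun_prop) (by fun_prop)
  · exact Measurable.ite measurableSet_Ici (by fun_prop) (by fun_prop)

lemma greenK_abs_zero_pos (lam : ℂ) {y : ℝ} (hy : 0 ≤ y) :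
    ‖greenK lam 0 y‖
      = 1 / (Real.sqrt 2 * ‖csqrt lam‖) * Real.exp (-((csqrt lam).im * y)) := by
  have h0 : |(0:ℝ) - y| = y := by
    rw [abs_of_nonpos (by linarith)]; ring
  have halpha : ((1 - Complex.I) / 2) + (starRingEnd ℂ) ((1 - Complex.I) / 2) = 1 := by
    have : (starRingEnd ℂ) ((1 - Complex.I) / 2) = (1 + Complex.I) / 2 := by
      simp [Complex.ext_iff, Complex.div_re, Complex.div_im, Complex.normSq_apply]
    rw [this]
    ring
  rw [greenK, if_pos le_rfl, if_pos hy, norm_mul, abs_pref]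
  have key : ((1 - Complex.I) / 2) * Complex.exp (Complex.I * csqrt lam * (((0:ℝ):ℂ) + (y:ℂ)))
      + (starRingEnd ℂ) ((1 - Complex.I) / 2) *
          Complex.exp (Complex.I * csqrt lam * ((|(0:ℝ) - y|:ℝ):ℂ))
      = Complex.exp (Complex.I * csqrt lam * ((y:ℝ):ℂ)) := by
    rw [h0, show (((0:ℝ):ℂ) + (y:ℂ)) = ((y:ℝ):ℂ) by push_cast; ring, ← add_mul, halpha,
      one_mul]
  rw [key, Complex.norm_exp]
  congr 1
  simp [Complex.mul_re, Complex.mul_im]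


lemma main_est {p q : ℝ} (hpq : p.HolderConjugate q) {V : ℝ → ℂ}
    (hV : MemLp V (ENNReal.ofReal p) (volume : Measure ℝ))
    {G : ℝ → ℂ} (hG : Measurable G)
    {K₁ K₂ : ℝ → ℝ} {M₁ M₂ : ℝ} (hM₁ : 0 ≤ M₁) (hM₂ : 0 ≤ M₂)
    (hK₁ : ∀ y : ℝ, y < 0 → ‖G y‖ ≤ K₁ y)
    (hK₂ : ∀ y : ℝ, 0 ≤ y → ‖G y‖ ≤ K₂ y)
    (hK₁m : Measurable K₁) (hK₂m : Measurable K₂)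
    (hq₁ : ∫⁻ y in Iio (0:ℝ), ENNReal.ofReal (K₁ y) ^ q ≤ ENNReal.ofReal (M₁ ^ q))
    (hq₂ : ∫⁻ y in Ioi (0:ℝ), ENNReal.ofReal (K₂ y) ^ q ≤ ENNReal.ofReal (M₂ ^ q)) :
    (∫ y : ℝ, ‖G y‖ * ‖V y‖) ≤
      M₁ * (eLpNorm V (ENNReal.ofReal p) ((volume : Measure ℝ).restrict (Iio 0))).toReal
      + M₂ * (eLpNorm V (ENNReal.ofReal p) ((volume : Measure ℝ).restrict (Ioi 0))).toReal := by
  have hVsm : AEStronglyMeasurable V (volume : Measure ℝ) := hV.1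
  have hmeas : AEStronglyMeasurable (fun y => ‖G y‖ * ‖V y‖)
      (volume : Measure ℝ) := by
    exact (hG.norm.aestronglyMeasurable).mul hVsm.norm
  rw [integral_eq_lintegral_of_nonneg_ae (ae_of_all _ fun y => by positivity) hmeas]
  have hpt : ∀ y : ℝ, ENNReal.ofReal (‖G y‖ * ‖V y‖)
      = ENNReal.ofReal (‖G y‖) * (‖V y‖₊ : ℝ≥0∞) := by
    intro y
    rw [ENNReal.ofReal_mul (by positivity), ofReal_norm (V y), enorm_eq_nnnorm]
  simp_rw [hpt]
  have hsplit : (∫⁻ y, ENNReal.ofReal (‖G y‖) * (‖V y‖₊ : ℝ≥0∞)) =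
      (∫⁻ y in Iio (0:ℝ), ENNReal.ofReal (‖G y‖) * (‖V y‖₊ : ℝ≥0∞))
      + (∫⁻ y in Ioi (0:ℝ), ENNReal.ofReal (‖G y‖) * (‖V y‖₊ : ℝ≥0∞)) := by
    rw [← lintegral_add_compl (fun y => ENNReal.ofReal (‖G y‖) * (‖V y‖₊ : ℝ≥0∞))
      measurableSet_Iio, compl_Iio,
      Measure.restrict_congr_set (Ioi_ae_eq_Ici (a := (0:ℝ))).symm]
  rw [hsplit]
  have hb₁ : (∫⁻ y in Iio (0:ℝ), ENNReal.ofReal (‖G y‖) * (‖V y‖₊ : ℝ≥0∞))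
      ≤ ENNReal.ofReal M₁ * eLpNorm V (ENNReal.ofReal p) (volume.restrict (Iio 0)) := by
    refine le_trans (setLIntegral_mono_ae' measurableSet_Iio (ae_of_all _ fun y hy =>
      mul_le_mul_left (ENNReal.ofReal_le_ofReal (hK₁ y hy)) _)) ?_
    exact half_bound K₁ hpq (hVsm.restrict) hM₁
      (hK₁m.ennreal_ofReal.aemeasurable) hq₁
  have hb₂ : (∫⁻ y in Ioi (0:ℝ), ENNReal.ofReal (‖G y‖) * (‖V y‖₊ : ℝ≥0∞))
      ≤ ENNReal.ofReal M₂ * eLpNorm V (ENNReal.ofReal p) (volume.restrict (Ioi 0)) := by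
    refine le_trans (setLIntegral_mono_ae' measurableSet_Ioi (ae_of_all _ fun y hy =>
      mul_le_mul_left (ENNReal.ofReal_le_ofReal (hK₂ y (le_of_lt hy))) _)) ?_
    exact half_bound K₂ hpq (hVsm.restrict) hM₂
      (hK₂m.ennreal_ofReal.aemeasurable) hq₂
  have hE₁ : eLpNorm V (ENNReal.ofReal p) (volume.restrict (Iio 0)) ≠ ⊤ :=
    (hV.restrict _).eLpNorm_ne_top
  have hE₂ : eLpNorm V (ENNReal.ofReal p) (volume.restrict (Ioi 0)) ≠ ⊤ :=
    (hV.restrict _).eLpNorm_ne_top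
  have hfin : ENNReal.ofReal M₁ * eLpNorm V (ENNReal.ofReal p) (volume.restrict (Iio 0))
      + ENNReal.ofReal M₂ * eLpNorm V (ENNReal.ofReal p) (volume.restrict (Ioi 0)) ≠ ⊤ := by
    apply ENNReal.add_ne_top.mpr
    constructor <;> exact ENNReal.mul_ne_top ENNReal.ofReal_ne_top (by assumption)
  refine le_trans (ENNReal.toReal_mono hfin (add_le_add hb₁ hb₂)) ?_
  rw [ENNReal.toReal_add (ENNReal.mul_ne_top ENNReal.ofReal_ne_top hE₁)
    (ENNReal.mul_ne_top ENNReal.ofReal_ne_top hE₂), ENNReal.toReal_mul, ENNReal.toReal_mul,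
    ENNReal.toReal_ofReal hM₁, ENNReal.toReal_ofReal hM₂]

lemma rpow_div_helper {C t q : ℝ} (hC : 0 ≤ C) (ht : 0 < t) (hq : 0 < q) :
    (C / t ^ (1/q)) ^ q = C ^ q / t := by
  rw [Real.div_rpow hC (by positivity), ← Real.rpow_mul ht.le, one_div,
    inv_mul_cancel₀ (ne_of_gt hq), Real.rpow_one]

lemma arith1 {A a b q N₁ N₂ : ℝ} (hA : 0 < A) (ha : 0 < a) (hb : 0 < b) (hq : 0 < q) :
    (1/(Real.sqrt 2 * A))/(q*a)^(1/q) * N₁ + (2*(1/(2*A)))/(q*b)^(1/q) * N₂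
      = 1/(q^(1/q) * A) * (N₁/(Real.sqrt 2 * a^(1/q)) + N₂/b^(1/q)) := by
  rw [Real.mul_rpow hq.le ha.le, Real.mul_rpow hq.le hb.le]
  have h2 : (0:ℝ) < Real.sqrt 2 := by positivity
  have hqq : 0 < q^(1/q) := Real.rpow_pos_of_pos hq _
  have haa : 0 < a^(1/q) := Real.rpow_pos_of_pos ha _
  have hbb : 0 < b^(1/q) := Real.rpow_pos_of_pos hb _
  field_simp

lemma arith2 {A a b q N₁ N₂ : ℝ} (hA : 0 < A) (ha : 0 < a) (hb : 0 < b) (hq : 0 < q) :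
    (2*(1/(2*A)))/(q*a)^(1/q) * N₁ + (1/(Real.sqrt 2 * A))/(q*b)^(1/q) * N₂
      = 1/(q^(1/q) * A) * (N₁/a^(1/q) + N₂/(Real.sqrt 2 * b^(1/q))) := by
  rw [Real.mul_rpow hq.le ha.le, Real.mul_rpow hq.le hb.le]
  have h2 : (0:ℝ) < Real.sqrt 2 := by positivity
  have hqq : 0 < q^(1/q) := Real.rpow_pos_of_pos hq _
  have haa : 0 < a^(1/q) := Real.rpow_pos_of_pos ha _
  have hbb : 0 < b^(1/q) := Real.rpow_pos_of_pos hb _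
  field_simp

/-- The Schur-test bounds on `∫ |G_λ(x,y)| |V(y)| dy` in terms of the `Lᵖ` norms of `V`
over the half-lines. -/
theorem greenK_schur_bounds (lam : ℂ) (hlam : 0 < lam.im) (p q : ℝ) (hp : 1 < p)
    (hq : q = p / (p - 1)) (V : ℝ → ℂ)
    (hV : MemLp V (ENNReal.ofReal p) (volume : Measure ℝ)) :
    (∀ x : ℝ, 0 ≤ x →
      (∫ y : ℝ, ‖greenK lam x y‖ * ‖V y‖) ≤
        1 / (q ^ (1 / q) * Real.sqrt (‖lam‖)) *
          ((eLpNorm V (ENNReal.ofReal p) ((volume : Measure ℝ).restrict (Set.Iio 0))).toReal /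
              (Real.sqrt 2 * (csqrt lam).re ^ (1 / q))
            + (eLpNorm V (ENNReal.ofReal p)
                  ((volume : Measure ℝ).restrict (Set.Ioi 0))).toReal /
                (csqrt lam).im ^ (1 / q))) ∧
    (∀ x : ℝ, x ≤ 0 →
      (∫ y : ℝ, ‖greenK lam x y‖ * ‖V y‖) ≤
        1 / (q ^ (1 / q) * Real.sqrt (‖lam‖)) *
          ((eLpNorm V (ENNReal.ofReal p) ((volume : Measure ℝ).restrict (Set.Iio 0))).toReal /
              (csqrt lam).re ^ (1 / q)
            + (eLpNorm V (ENNReal.ofReal p)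
                  ((volume : Measure ℝ).restrict (Set.Ioi 0))).toReal /
                (Real.sqrt 2 * (csqrt lam).im ^ (1 / q)))) := by
  have hlam0 : lam ≠ 0 := lam_ne_zero hlam
  have ha : 0 < (csqrt lam).re := csqrt_re_pos hlam
  have hb : 0 < (csqrt lam).im := csqrt_im_pos hlam
  have hpq : p.HolderConjugate q := (Real.holderConjugate_iff_eq_conjExponent hp).mpr hq
  have hq1 : 1 < q := hpq.symm.lt
  have hq0 : 0 < q := by linarith
  have hAeq : ‖csqrt lam‖ = Real.sqrt (‖lam‖) := abs_csqrt hlam0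
  have hApos : 0 < ‖csqrt lam‖ := by
    rw [hAeq]
    have : 0 < ‖lam‖ := norm_pos_iff.mpr hlam0
    positivity
  have c₁0 : (0:ℝ) ≤ 1/(Real.sqrt 2 * ‖csqrt lam‖) := by positivity
  have c₂0 : (0:ℝ) ≤ 1/(2 * ‖csqrt lam‖) := by positivity
  constructor
  · intro x hx
    rw [← hAeq]
    have hM₁ : (0:ℝ) ≤ (1/(Real.sqrt 2 * ‖csqrt lam‖))
        / (q*(csqrt lam).re)^(1/q) := by positivity
    have hM₂ : (0:ℝ) ≤ (2*(1/(2 * ‖csqrt lam‖)))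
        / (q*(csqrt lam).im)^(1/q) := by positivity
    refine le_trans (main_est hpq hV (measurable_greenK lam x) hM₁ hM₂
      (K₁ := fun y => 1/(Real.sqrt 2 * ‖csqrt lam‖) * Real.exp ((csqrt lam).re * y))
      (K₂ := fun y => 1/(2 * ‖csqrt lam‖) *
        (Real.exp (-((csqrt lam).im * |x - y|)) + Real.exp (-((csqrt lam).im * (x + y)))))
      ?_ ?_ ?_ ?_ ?_ ?_) ?_
    · intro y hy
      rw [greenK_abs_pos_neg lam hx hy]
      refine mul_le_mul_of_nonneg_left ?_ c₁0
      exact Real.exp_le_exp.mpr (by nlinarith)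
    · intro y hy
      exact greenK_abs_pos_pos lam hx hy
    · fun_prop
    · fun_prop
    · refine le_of_eq ?_
      rw [kq_single_Iio ha c₁0 hq0, rpow_div_helper c₁0 (by positivity) hq0]
    · refine le_trans (kq_pair_Ioi hb c₂0 hq1.le hx) (le_of_eq ?_)
      rw [rpow_div_helper (by positivity : (0:ℝ) ≤ 2*(1/(2 * ‖csqrt lam‖)))
        (by positivity) hq0]
    · exact le_of_eq (arith1 hApos ha hb hq0)
  · intro x hx
    rw [← hAeq]
    have hM₁ : (0:ℝ) ≤ (2*(1/(2 * ‖csqrt lam‖)))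
        / (q*(csqrt lam).re)^(1/q) := by positivity
    have hM₂ : (0:ℝ) ≤ (1/(Real.sqrt 2 * ‖csqrt lam‖))
        / (q*(csqrt lam).im)^(1/q) := by positivity
    refine le_trans (main_est hpq hV (measurable_greenK lam x) hM₁ hM₂
      (K₁ := fun y => 1/(2 * ‖csqrt lam‖) *
        (Real.exp (-((csqrt lam).re * |x - y|)) + Real.exp ((csqrt lam).re * (x + y))))
      (K₂ := fun y => 1/(Real.sqrt 2 * ‖csqrt lam‖) * Real.exp (-((csqrt lam).im * y)))
      ?_ ?_ ?_ ?_ ?_ ?_) ?_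
    · intro y hy
      exact greenK_abs_neg_neg lam hx hy
    · intro y hy
      rcases lt_or_eq_of_le hx with hx0 | hx0
      · rw [greenK_abs_neg_pos lam hx0 hy]
        refine mul_le_mul_of_nonneg_left ?_ c₁0
        exact Real.exp_le_exp.mpr (by nlinarith)
      · subst hx0
        rw [greenK_abs_zero_pos lam hy]
    · fun_prop
    · fun_prop
    · refine le_trans (kq_pair_Iio ha c₂0 hq1.le hx) (le_of_eq ?_)
      rw [rpow_div_helper (by positivity : (0:ℝ) ≤ 2*(1/(2 * ‖csqrt lam‖)))
        (by positivity) hq0]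
    · refine le_of_eq ?_
      rw [kq_single_Ioi hb c₁0 hq0, rpow_div_helper c₁0 (by positivity) hq0]
    · exact le_of_eq (arith2 hApos ha hb hq0)
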